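/- arXiv:1705.04273 — 5 statements merged into one kernel-verified Lean document; each statement's English description precedes it below -/
import Mathlib

section
/- For probability measures μ, ν on ℝ with finite first moments, μ ≼ ν in convex order if and only if the potential functions satisfy u_μ(x) ≤ u_ν(x) for all x ∈ ℝ and μ, ν have equal means, where u_μ(x) := ∫ |x − y| dμ(y). -/
/-!
Since `|x - k| = 2 (x - k)⁺ - (x - k)`, the potentials and the means determine every call price
`∫ (y - k)⁺` and every put price `∫ (k - y)⁺`. Conversely, subtracting a supporting line at `0`
from a convex `ξ` leaves `η ≥ 0 = η 0`, and `η` is the sum of a convex function vanishing on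
`(-∞, 0]` and the reflection of another one. A convex `φ` vanishing on `(-∞, 0]` is the mixture
`φ x = ∫ (x - k)⁺ dm(k)` of call payoffs against the Stieltjes measure `m` of its right
derivative, so by Tonelli `∫ φ dμ ≤ ∫ φ dν` follows from the inequalities between call prices.
-/

open MeasureTheory Set Filter Topology

lemma integral_le_integral_of_lintegral_ofReal_le {α : Type*} [MeasurableSpace α]
    {μ ν : Measure α} {f : α → ℝ} (hf : ∀ x, 0 ≤ f x) (hfμ : AEStronglyMeasurable f μ)
    (hfν : Integrable f ν) (h : ∫⁻ x, ENNReal.ofReal (f x) ∂μ ≤ ∫⁻ x, ENNReal.ofReal (f x) ∂ν) :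
    ∫ x, f x ∂μ ≤ ∫ x, f x ∂ν := by
  rw [integral_eq_lintegral_of_nonneg_ae (ae_of_all _ hf) hfμ,
    integral_eq_lintegral_of_nonneg_ae (ae_of_all _ hf) hfν.aestronglyMeasurable]
  exact ENNReal.toReal_mono hfν.lintegral_lt_top.ne h

lemma lintegral_ofReal_eq_ofReal_integral_abs_add {α : Type*} [MeasurableSpace α]
    {μ : Measure α} {f : α → ℝ} (hf : Integrable f μ) :
    ∫⁻ x, ENNReal.ofReal (f x) ∂μ = ENNReal.ofReal ((∫ x, |f x| ∂μ + ∫ x, f x ∂μ) / 2) := by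
  have hpos : ∀ x, ENNReal.ofReal (f x) = ENNReal.ofReal ((|f x| + f x) / 2) := fun x ↦ by
    rcases le_total 0 (f x) with h | h
    · rw [abs_of_nonneg h, add_self_div_two]
    · rw [abs_of_nonpos h, neg_add_cancel, zero_div, ENNReal.ofReal_of_nonpos h,
        ENNReal.ofReal_zero]
  rw [lintegral_congr hpos, ← ofReal_integral_eq_lintegral_ofReal (f := fun x ↦ (|f x| + f x) / 2)
    ((hf.abs.add hf).div_const 2)
    (ae_of_all _ fun x ↦ by simp only [Pi.zero_apply]; linarith [neg_abs_le (f x)]),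
    integral_div, integral_add hf.abs hf]

lemma lintegral_ofReal_sub_eq_setLIntegral_measure_Iic (m : Measure ℝ) [SFinite m] (x : ℝ) :
    ∫⁻ k, ENNReal.ofReal (x - k) ∂m = ∫⁻ t in Iic x, m (Iic t) := by
  have hS : MeasurableSet {p : ℝ × ℝ | p.1 ≤ p.2 ∧ p.2 ≤ x} :=
    (measurableSet_le measurable_fst measurable_snd).inter
      (measurableSet_le measurable_snd measurable_const)
  convert (Measure.prod_apply (μ := m) (ν := volume) hS).symm.trans
    (Measure.prod_apply_symm hS) using 1
  · simp_rw [← Real.volume_Icc]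
    rfl
  · rw [← lintegral_indicator measurableSet_Iic]
    congr 1 with t
    by_cases ht : t ≤ x <;> simp [ht, indicator, Iic]

lemma Monotone.stieltjesFunction_ae_eq {g : ℝ → ℝ} (hg : Monotone g) :
    hg.stieltjesFunction =ᵐ[volume] g :=
  (hg.countable_not_continuousAt.ae_notMem volume).mono fun _ ht ↦
    (not_not.1 ht).continuousWithinAt.rightLim_eq

lemma derivWithin_Ioi_eq_zero_of_forall_le_zero {φ : ℝ → ℝ} (hφ0 : ∀ x ≤ 0, φ x = 0) {t : ℝ}
    (ht : t < 0) : derivWithin φ (Ioi t) t = 0 := by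
  have : φ =ᶠ[𝓝[Ioi t] t] fun _ ↦ 0 :=
    eventually_nhdsWithin_of_eventually_nhds <|
      (eventually_lt_nhds ht).mono fun x hx ↦ hφ0 x hx.le
  exact ((hasDerivWithinAt_const t (Ioi t) (0 : ℝ)).congr_of_eventuallyEq this
    (hφ0 t ht.le)).derivWithin (uniqueDiffWithinAt_Ioi t)

namespace ConvexOn

variable {φ : ℝ → ℝ}

lemma monotone_rightDeriv (hφ : ConvexOn ℝ univ φ) :
    Monotone fun x ↦ derivWithin φ (Ioi x) x := by
  simpa using hφ.monotoneOn_rightDeriv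

lemma add_rightDeriv_mul_sub_le (hφ : ConvexOn ℝ univ φ) (x y : ℝ) :
    φ x + derivWithin φ (Ioi x) x * (y - x) ≤ φ y := by
  rcases lt_trichotomy x y with hxy | rfl | hyx
  · have h := hφ.rightDeriv_le_slope (mem_univ x) (mem_univ y) hxy
      (hφ.differentiableWithinAt_Ioi_of_mem_interior (by simp))
    rw [slope_def_field, le_div_iff₀ (sub_pos.2 hxy)] at h
    linarith
  · simp
  · have h := (hφ.slope_le_leftDeriv (mem_univ y) (mem_univ x) hyx
      (hφ.differentiableWithinAt_Iio_of_mem_interior (by simp))).trans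
      (hφ.leftDeriv_le_rightDeriv_of_mem_interior (by simp))
    rw [slope_def_field, div_le_iff₀ (sub_pos.2 hyx)] at h
    linarith

lemma ofReal_eq_setLIntegral_rightDeriv (hφ : ConvexOn ℝ univ φ) (hφ0 : ∀ x ≤ 0, φ x = 0)
    (x : ℝ) : ENNReal.ofReal (φ x) = ∫⁻ t in Iic x, ENNReal.ofReal (derivWithin φ (Ioi t) t) := by
  set g := fun t ↦ derivWithin φ (Ioi t) t
  have hg : Monotone g := hφ.monotone_rightDeriv
  have hg0 : ∀ t < 0, g t = 0 := fun t ht ↦ derivWithin_Ioi_eq_zero_of_forall_le_zero hφ0 ht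
  have hg_nonneg : ∀ t, 0 ≤ g t := fun t ↦
    (hg0 _ (min_lt_of_right_lt neg_one_lt_zero)).symm.le.trans (hg (min_le_left t (-1)))
  set a := min x 0 - 1
  have ha : a < 0 := by linarith [min_le_right x 0]
  have hax : a ≤ x := by linarith [min_le_left x 0]
  have hftc : ∫ t in a..x, g t = φ x - φ a :=
    intervalIntegral.integral_eq_sub_of_hasDeriv_right_of_le hax
      (hφ.continuousOn isOpen_univ |>.mono (subset_univ _))
      (fun t _ ↦ hφ.hasDerivWithinAt_rightDeriv_of_mem_interior (by simp)) hg.intervalIntegrable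
  have hleft : ∫⁻ t in Iic a, ENNReal.ofReal (g t) = 0 := by
    rw [setLIntegral_congr_fun measurableSet_Iic (g := fun _ ↦ 0)
      (fun t ht ↦ by rw [hg0 t (ht.trans_lt ha), ENNReal.ofReal_zero])]
    simp
  rw [← Iic_union_Ioc_eq_Iic hax, lintegral_union measurableSet_Ioc (Iic_disjoint_Ioc le_rfl),
    hleft, zero_add, ← ofReal_integral_eq_lintegral_ofReal
      ((intervalIntegrable_iff_integrableOn_Ioc_of_le hax).1 hg.intervalIntegrable)
      (ae_of_all _ hg_nonneg), ← intervalIntegral.integral_of_le hax, hftc, hφ0 a ha.le, sub_zero]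

theorem exists_measure_ofReal_eq_lintegral (hφ : ConvexOn ℝ univ φ) (hφ0 : ∀ x ≤ 0, φ x = 0) :
    ∃ m : Measure ℝ, SFinite m ∧ ∀ x, ENNReal.ofReal (φ x) = ∫⁻ k, ENNReal.ofReal (x - k) ∂m := by
  set g := fun t ↦ derivWithin φ (Ioi t) t
  have hg : Monotone g := hφ.monotone_rightDeriv
  have hg0 : ∀ t < 0, g t = 0 := fun t ht ↦ derivWithin_Ioi_eq_zero_of_forall_le_zero hφ0 ht
  set G := hg.stieltjesFunction
  have hG0 : ∀ t < 0, G t = 0 := fun t ht ↦ by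
    obtain ⟨s, hts, hs⟩ := exists_between ht
    exact le_antisymm ((hg.rightLim_le hts).trans (hg0 s hs).le)
      ((hg0 t ht).symm.le.trans (hg.le_rightLim le_rfl))
  have hm : ∀ t, G.measure (Iic t) = ENNReal.ofReal (G t) := fun t ↦ by
    simpa using G.measure_Iic (tendsto_const_nhds.congr'
      ((eventually_lt_atBot 0).mono fun t ht ↦ (hG0 t ht).symm)) t
  refine ⟨G.measure, inferInstance, fun x ↦ ?_⟩
  rw [lintegral_ofReal_sub_eq_setLIntegral_measure_Iic, hφ.ofReal_eq_setLIntegral_rightDeriv hφ0]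
  exact lintegral_congr_ae <| ae_restrict_of_ae <|
    hg.stieltjesFunction_ae_eq.mono fun t ht ↦ ((hm t).trans (congrArg ENNReal.ofReal ht)).symm

lemma comp_max_of_forall_le (hφ : ConvexOn ℝ univ φ) {c : ℝ} (hmin : ∀ x, φ c ≤ φ x) :
    ConvexOn ℝ univ fun x ↦ φ (max x c) := by
  have hmono : MonotoneOn φ (Ici c) := fun a ha b _ hab ↦ by
    rcases (mem_Ici.1 ha).eq_or_lt with rfl | hca
    · exact hmin b
    · exact hφ.le_right_of_left_le'' (mem_univ c) (mem_univ b) hca hab (hmin a)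
  refine ⟨convex_univ, fun x _ y _ a b ha hb hab ↦ ?_⟩
  calc φ (max (a • x + b • y) c) ≤ φ (a • max x c + b • max y c) := by
        have hx := mul_le_mul_of_nonneg_left (le_max_right x c) ha
        have hy := mul_le_mul_of_nonneg_left (le_max_right y c) hb
        have hc : a * c + b * c = c := by rw [← add_mul, hab, one_mul]
        refine hmono (mem_Ici.2 (le_max_right _ _)) ?_ (max_le ?_ ?_)
        · simp only [smul_eq_mul, mem_Ici]
          linarith
        · simp only [smul_eq_mul]
          linarith [mul_le_mul_of_nonneg_left (le_max_left x c) ha,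
            mul_le_mul_of_nonneg_left (le_max_left y c) hb]
        · simp only [smul_eq_mul]
          linarith
    _ ≤ a • φ (max x c) + b • φ (max y c) := hφ.2 trivial trivial ha hb hab

theorem lintegral_ofReal_le_of_forall_le_zero {μ ν : Measure ℝ} [SFinite μ] [SFinite ν]
    (hcall : ∀ k, ∫⁻ y, ENNReal.ofReal (y - k) ∂μ ≤ ∫⁻ y, ENNReal.ofReal (y - k) ∂ν)
    (hφ : ConvexOn ℝ univ φ) (hφ0 : ∀ x ≤ 0, φ x = 0) :
    ∫⁻ y, ENNReal.ofReal (φ y) ∂μ ≤ ∫⁻ y, ENNReal.ofReal (φ y) ∂ν := by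
  obtain ⟨m, _, hm⟩ := hφ.exists_measure_ofReal_eq_lintegral hφ0
  have hmeas : Measurable (Function.uncurry fun y k : ℝ ↦ ENNReal.ofReal (y - k)) := by
    fun_prop
  simp_rw [hm]
  rw [lintegral_lintegral_swap hmeas.aemeasurable, lintegral_lintegral_swap hmeas.aemeasurable]
  exact lintegral_mono fun k ↦ hcall k

theorem lintegral_ofReal_le_of_nonneg {μ ν : Measure ℝ} [SFinite μ] [SFinite ν]
    (hcall : ∀ k, ∫⁻ y, ENNReal.ofReal (y - k) ∂μ ≤ ∫⁻ y, ENNReal.ofReal (y - k) ∂ν)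
    (hput : ∀ k, ∫⁻ y, ENNReal.ofReal (k - y) ∂μ ≤ ∫⁻ y, ENNReal.ofReal (k - y) ∂ν)
    (hφ : ConvexOn ℝ univ φ) (hφ0 : φ 0 = 0) (hφ_nonneg : ∀ x, 0 ≤ φ x) :
    ∫⁻ y, ENNReal.ofReal (φ y) ∂μ ≤ ∫⁻ y, ENNReal.ofReal (φ y) ∂ν := by
  have hsplit : ∀ y, ENNReal.ofReal (φ y) =
      ENNReal.ofReal (φ (max y 0)) + ENNReal.ofReal (φ (-max (-y) 0)) := fun y ↦ by
    rcases le_total y 0 with h | h <;> simp [h, hφ0]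
  have hreflect : ∀ ρ : Measure ℝ, ∫⁻ y, ENNReal.ofReal (φ (-max (-y) 0)) ∂ρ =
      ∫⁻ y, ENNReal.ofReal (φ (-max y 0)) ∂ρ.map (MeasurableEquiv.neg ℝ) := fun ρ ↦ by
    rw [lintegral_map_equiv]
    rfl
  have hφneg : ConvexOn ℝ univ fun x ↦ φ (-x) :=
    ⟨convex_univ, fun x _ y _ a b ha hb hab ↦ by
      simpa [smul_eq_mul, neg_add_rev, add_comm] using
        hφ.2 (mem_univ (-x)) (mem_univ (-y)) ha hb hab⟩
  have hcall_neg (k : ℝ) : ∫⁻ y, ENNReal.ofReal (y - k) ∂μ.map (MeasurableEquiv.neg ℝ) ≤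
      ∫⁻ y, ENNReal.ofReal (y - k) ∂ν.map (MeasurableEquiv.neg ℝ) := by
    rw [lintegral_map_equiv, lintegral_map_equiv]
    convert hput (-k) using 4 <;> simp only [MeasurableEquiv.neg_apply] <;> ring
  have hpos := (hφ.comp_max_of_forall_le (c := 0) fun x ↦ hφ0.symm ▸ hφ_nonneg x
    ).lintegral_ofReal_le_of_forall_le_zero hcall fun x hx ↦ by simp [hx, hφ0]
  have hneg := (hφneg.comp_max_of_forall_le (c := 0) fun x ↦ by simpa [hφ0] using hφ_nonneg (-x)
    ).lintegral_ofReal_le_of_forall_le_zero hcall_neg fun x hx ↦ by simp [hx, hφ0]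
  have hcont : Continuous φ := continuousOn_univ.1 (hφ.continuousOn isOpen_univ)
  rw [lintegral_congr hsplit, lintegral_congr hsplit, lintegral_add_left (by fun_prop),
    lintegral_add_left (by fun_prop), hreflect μ, hreflect ν]
  exact add_le_add hpos hneg

end ConvexOn

lemma lintegral_ofReal_sub_le_of_potential_le {μ ν : Measure ℝ} [IsProbabilityMeasure μ]
    [IsProbabilityMeasure ν] (hμ : Integrable (fun x : ℝ ↦ x) μ)
    (hν : Integrable (fun x : ℝ ↦ x) ν) (hpot : ∀ x : ℝ, ∫ y, |x - y| ∂μ ≤ ∫ y, |x - y| ∂ν)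
    (hmean : ∫ x, x ∂μ = ∫ x, x ∂ν) (k : ℝ) :
    (∫⁻ y, ENNReal.ofReal (y - k) ∂μ ≤ ∫⁻ y, ENNReal.ofReal (y - k) ∂ν) ∧
      ∫⁻ y, ENNReal.ofReal (k - y) ∂μ ≤ ∫⁻ y, ENNReal.ofReal (k - y) ∂ν := by
  have hcall (ρ : Measure ℝ) [IsProbabilityMeasure ρ] (hρ : Integrable (fun x : ℝ ↦ x) ρ) :
      ∫⁻ y, ENNReal.ofReal (y - k) ∂ρ =
        ENNReal.ofReal ((∫ y, |k - y| ∂ρ + (∫ y, y ∂ρ - k)) / 2) := by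
    rw [lintegral_ofReal_eq_ofReal_integral_abs_add (f := fun y ↦ y - k)
      (hρ.sub (integrable_const k)),
      integral_sub hρ (integrable_const k)]
    simp [abs_sub_comm]
  have hput (ρ : Measure ℝ) [IsProbabilityMeasure ρ] (hρ : Integrable (fun x : ℝ ↦ x) ρ) :
      ∫⁻ y, ENNReal.ofReal (k - y) ∂ρ =
        ENNReal.ofReal ((∫ y, |k - y| ∂ρ + (k - ∫ y, y ∂ρ)) / 2) := by
    rw [lintegral_ofReal_eq_ofReal_integral_abs_add (f := fun y ↦ k - y)
      ((integrable_const k).sub hρ),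
      integral_sub (integrable_const k) hρ]
    simp
  rw [hcall μ hμ, hcall ν hν, hput μ hμ, hput ν hν, hmean]
  exact ⟨ENNReal.ofReal_le_ofReal (by linarith [hpot k]),
    ENNReal.ofReal_le_ofReal (by linarith [hpot k])⟩

theorem ConvexOn.integral_le_integral_of_lintegral_ofReal_sub_le {μ ν : Measure ℝ}
    [IsProbabilityMeasure μ] [IsProbabilityMeasure ν] (hμ : Integrable (fun x : ℝ ↦ x) μ)
    (hν : Integrable (fun x : ℝ ↦ x) ν) (hmean : ∫ x, x ∂μ = ∫ x, x ∂ν)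
    (hcall : ∀ k, ∫⁻ y, ENNReal.ofReal (y - k) ∂μ ≤ ∫⁻ y, ENNReal.ofReal (y - k) ∂ν)
    (hput : ∀ k, ∫⁻ y, ENNReal.ofReal (k - y) ∂μ ≤ ∫⁻ y, ENNReal.ofReal (k - y) ∂ν)
    {ξ : ℝ → ℝ} (hξ : ConvexOn ℝ univ ξ) (hξμ : Integrable ξ μ) (hξν : Integrable ξ ν) :
    ∫ x, ξ x ∂μ ≤ ∫ x, ξ x ∂ν := by
  set c := derivWithin ξ (Ioi 0) 0
  have hdecomp (ρ : Measure ℝ) [IsProbabilityMeasure ρ] (hρ : Integrable (fun x : ℝ ↦ x) ρ)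
      (hξρ : Integrable ξ ρ) :
      Integrable (fun x ↦ ξ x - (c * x + ξ 0)) ρ ∧
        ∫ x, ξ x ∂ρ = ∫ x, ξ x - (c * x + ξ 0) ∂ρ + (c * ∫ x, x ∂ρ + ξ 0) := by
    have haff : Integrable (fun x ↦ c * x + ξ 0) ρ := (hρ.const_mul c).add (integrable_const _)
    refine ⟨hξρ.sub haff, ?_⟩
    rw [integral_sub hξρ haff, integral_add (hρ.const_mul c) (integrable_const _),
      integral_const_mul]
    simp
  obtain ⟨hημ, hμξ⟩ := hdecomp μ hμ hξμ
  obtain ⟨hην, hνξ⟩ := hdecomp ν hν hξν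
  have hη_nonneg : ∀ x, 0 ≤ ξ x - (c * x + ξ 0) := fun x ↦ by
    linarith [hξ.add_rightDeriv_mul_sub_le 0 x]
  have hη := hξ.sub (((LinearMap.mul ℝ ℝ c).concaveOn convex_univ).add_const (ξ 0))
  have key := integral_le_integral_of_lintegral_ofReal_le hη_nonneg hημ.aestronglyMeasurable hην
    (hη.lintegral_ofReal_le_of_nonneg hcall hput (by simp) hη_nonneg)
  rw [hμξ, hνξ, hmean]
  linarith

/-- `μ ≼ ν` in convex order iff the potential functions satisfy `u_μ ≤ u_ν` everywhere
and the means agree, where `u_μ(x) = ∫ |x - y| dμ(y)`. -/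
theorem convexOrder_iff_potentials
    (μ ν : Measure ℝ) [IsProbabilityMeasure μ] [IsProbabilityMeasure ν]
    (hμ : Integrable (fun x : ℝ => x) μ) (hν : Integrable (fun x : ℝ => x) ν) :
    (∀ ξ : ℝ → ℝ, ConvexOn ℝ univ ξ → Integrable ξ μ → Integrable ξ ν →
        ∫ x, ξ x ∂μ ≤ ∫ x, ξ x ∂ν)
      ↔ ((∀ x : ℝ, ∫ y, |x - y| ∂μ ≤ ∫ y, |x - y| ∂ν) ∧
          ∫ x, x ∂μ = ∫ x, x ∂ν) := by
  constructor
  · intro H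
    refine ⟨fun x ↦ H _ ?_ ((integrable_const x).sub hμ).abs ((integrable_const x).sub hν).abs,
      le_antisymm (H _ (convexOn_id convex_univ) hμ hν) ?_⟩
    · simpa only [dist_comm, Real.dist_eq] using convexOn_univ_dist x
    · have h := H _ (concaveOn_id convex_univ).neg hμ.neg hν.neg
      simp only [Pi.neg_apply, id] at h
      rw [integral_neg, integral_neg] at h
      linarith
  · rintro ⟨hpot, hmean⟩ ξ hξ hξμ hξν
    have hhinge := lintegral_ofReal_sub_le_of_potential_le hμ hν hpot hmean
    exact hξ.integral_le_integral_of_lintegral_ofReal_sub_le hμ hν hmean (fun k ↦ (hhinge k).1)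
      (fun k ↦ (hhinge k).2) hξμ hξν
end

section
/- Let μ ≼ ν be probability measures on ℝ in convex order with finite first moments. If u_μ(x₀) = u_ν(x₀) for some x₀, then for every martingale coupling P of (μ, ν) (i.e. P has marginals μ, ν and E_P[Y | X] = X), P-almost surely, Y ≤ x₀ whenever X ≤ x₀, and Y ≥ x₀ whenever X ≥ x₀; that is, no mass crosses x₀. -/
open MeasureTheory Set

/-- `P` is a martingale coupling of `(μ, ν)`: the marginals of `P` are `μ` and `ν` and
`E_P[Y | X] = X`, expressed by `∫ φ(X)(Y - X) dP = 0` for all bounded measurable `φ`. -/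
def IsMartingaleCoupling (P : Measure (ℝ × ℝ)) (μ ν : Measure ℝ) : Prop :=
  P.map Prod.fst = μ ∧ P.map Prod.snd = ν ∧
    ∀ φ : ℝ → ℝ, Measurable φ → (∃ C : ℝ, ∀ x, |φ x| ≤ C) →
      ∫ p : ℝ × ℝ, φ p.1 * (p.2 - p.1) ∂P = 0

/-- If `u_μ(x₀) = u_ν(x₀)` then no mass crosses `x₀` under any martingale coupling of
`(μ, ν)`. -/
theorem no_mass_crossing
    (μ ν : Measure ℝ) [IsProbabilityMeasure μ] [IsProbabilityMeasure ν]
    (hμ : Integrable (fun x : ℝ => x) μ) (hν : Integrable (fun x : ℝ => x) ν)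
    (hcx : ∀ ξ : ℝ → ℝ, ConvexOn ℝ univ ξ → Integrable ξ μ → Integrable ξ ν →
      ∫ x, ξ x ∂μ ≤ ∫ x, ξ x ∂ν)
    (x₀ : ℝ) (hpot : ∫ y, |x₀ - y| ∂μ = ∫ y, |x₀ - y| ∂ν)
    (P : Measure (ℝ × ℝ)) [IsProbabilityMeasure P]
    (hP : IsMartingaleCoupling P μ ν) :
    ∀ᵐ p : ℝ × ℝ ∂P, (p.1 ≤ x₀ → p.2 ≤ x₀) ∧ (x₀ ≤ p.1 → x₀ ≤ p.2) := by
  obtain ⟨h1, h2, hmart⟩ := hP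
  have hm : Measurable fun y : ℝ => |x₀ - y| := by fun_prop
  -- integrability facts
  have hXint : Integrable (fun p : ℝ × ℝ => p.1) P := by
    have := hμ
    rw [← h1] at this
    exact (integrable_map_measure aestronglyMeasurable_id measurable_fst.aemeasurable).mp this
  have hYint : Integrable (fun p : ℝ × ℝ => p.2) P := by
    have := hν
    rw [← h2] at this
    exact (integrable_map_measure aestronglyMeasurable_id measurable_snd.aemeasurable).mp this
  have hAμ : Integrable (fun y : ℝ => |x₀ - y|) μ := ((integrable_const x₀).sub hμ).abs
  have hAν : Integrable (fun y : ℝ => |x₀ - y|) ν := ((integrable_const x₀).sub hν).abs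
  have hAX : Integrable (fun p : ℝ × ℝ => |x₀ - p.1|) P := by
    have := hAμ
    rw [← h1] at this
    exact (integrable_map_measure hm.aestronglyMeasurable measurable_fst.aemeasurable).mp this
  have hAY : Integrable (fun p : ℝ × ℝ => |x₀ - p.2|) P := by
    have := hAν
    rw [← h2] at this
    exact (integrable_map_measure hm.aestronglyMeasurable measurable_snd.aemeasurable).mp this
  have hintAY : ∫ p : ℝ × ℝ, |x₀ - p.2| ∂P = ∫ y, |x₀ - y| ∂ν := by
    rw [← h2, integral_map measurable_snd.aemeasurable hm.aestronglyMeasurable]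
  have hintAX : ∫ p : ℝ × ℝ, |x₀ - p.1| ∂P = ∫ y, |x₀ - y| ∂μ := by
    rw [← h1, integral_map measurable_fst.aemeasurable hm.aestronglyMeasurable]
  -- key lemma for a suitable test function φ
  have key : ∀ φ : ℝ → ℝ, Measurable φ → (∀ x, |φ x| ≤ 1) →
      (∀ x y : ℝ, |x₀ - x| + φ x * (y - x) ≤ |x₀ - y|) →
      ∀ᵐ p : ℝ × ℝ ∂P, |x₀ - p.2| - |x₀ - p.1| - φ p.1 * (p.2 - p.1) = 0 := by
    intro φ hφm hφb hφle
    have hφint : Integrable (fun p : ℝ × ℝ => φ p.1 * (p.2 - p.1)) P := by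
      refine Integrable.bdd_mul (c := 1) (hYint.sub hXint)
        ((hφm.comp measurable_fst).aestronglyMeasurable) ?_
      exact Filter.Eventually.of_forall fun p => by
        simpa [Real.norm_eq_abs] using hφb p.1
    have hsub : Integrable (fun p : ℝ × ℝ => |x₀ - p.2| - |x₀ - p.1|) P := hAY.sub hAX
    have hgint : Integrable (fun p : ℝ × ℝ =>
        |x₀ - p.2| - |x₀ - p.1| - φ p.1 * (p.2 - p.1)) P := hsub.sub hφint
    have hgnn : ∀ p : ℝ × ℝ,
        0 ≤ |x₀ - p.2| - |x₀ - p.1| - φ p.1 * (p.2 - p.1) := by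
      intro p
      have := hφle p.1 p.2
      linarith
    have hgzero : ∫ p : ℝ × ℝ, (|x₀ - p.2| - |x₀ - p.1| - φ p.1 * (p.2 - p.1)) ∂P = 0 := by
      rw [integral_sub hsub hφint, integral_sub hAY hAX,
        hmart φ hφm ⟨1, hφb⟩, hintAY, hintAX, hpot]
      ring
    have := (integral_eq_zero_iff_of_nonneg (fun p => hgnn p) hgint).mp hgzero
    filter_upwards [this] with p hp using hp
  -- apply with two test functions
  have key1 := key (fun x => if x₀ ≤ x then (1 : ℝ) else -1)
    (Measurable.ite (measurableSet_le measurable_const measurable_id)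
      measurable_const measurable_const)
    (by intro x; by_cases h : x₀ ≤ x <;> simp [h])
    (by
      intro x y
      by_cases h : x₀ ≤ x <;> simp only [h, if_true, if_false]
      · rw [abs_of_nonpos (by linarith : x₀ - x ≤ 0)]
        linarith [neg_abs_le (x₀ - y)]
      · push_neg at h
        rw [abs_of_pos (by linarith : (0:ℝ) < x₀ - x)]
        nlinarith [le_abs_self (x₀ - y), neg_abs_le (x₀ - y), abs_nonneg (x₀ - y)])
  have key2 := key (fun x => if x ≤ x₀ then (-1 : ℝ) else 1)
    (Measurable.ite (measurableSet_le measurable_id measurable_const)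
      measurable_const measurable_const)
    (by intro x; by_cases h : x ≤ x₀ <;> simp [h])
    (by
      intro x y
      by_cases h : x ≤ x₀ <;> simp only [h, if_true, if_false]
      · rw [abs_of_nonneg (by linarith : (0:ℝ) ≤ x₀ - x)]
        linarith [le_abs_self (x₀ - y)]
      · push_neg at h
        rw [abs_of_neg (by linarith : x₀ - x < 0)]
        linarith [neg_abs_le (x₀ - y)])
  filter_upwards [key1, key2] with p hp1 hp2
  constructor
  · intro hx
    simp only [hx, if_true] at hp2
    rw [abs_of_nonneg (by linarith : (0:ℝ) ≤ x₀ - p.1)] at hp2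
    have : |x₀ - p.2| = x₀ - p.2 := by linarith
    linarith [abs_nonneg (x₀ - p.2)]
  · intro hx
    simp only [hx, if_true] at hp1
    rw [abs_of_nonpos (by linarith : x₀ - p.1 ≤ 0)] at hp1
    have : |x₀ - p.2| = p.2 - x₀ := by linarith
    linarith [abs_nonneg (x₀ - p.2)]
end

section
/- Non-attainment example: let y₀ = 0, y_n = Σ_{k=1}^n 1/k², x_n = (y_{n−1}+y_n)/2, y_∞ = Σ_{k=1}^∞ 1/k². Suppose g : ℝ → ℝ ∪ {−∞} is concave on [0, y_∞), affine on each interval [y_{n−1}, y_n] with slope h_n, and the slopes satisfy h_n ≥ h_{n+1} + 1 for all n ≥ 1. Then lim_{y → y_∞⁻} g(y) = −∞. -/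
/-!
Since `h (n + 1) ≤ h 1 - n`, the increment `g (y (n + 1)) - g (y n) = h (n + 1) / (n + 1) ^ 2` is
at most `(h 1 + 1) / (n + 1) ^ 2 - 1 / (n + 1)`: a summable term minus a harmonic one, so
`g (y n) → -∞`. Between two breakpoints the affine `g` stays below the larger of its endpoint
values, so `g → -∞` along all of `[y N, y_∞)`, not only along the breakpoints.
-/

open Set Filter Finset Topology

lemma le_sub_natCast_of_succ_add_one_le {a : ℕ → ℝ} (ha : ∀ n, 1 ≤ n → a (n + 1) + 1 ≤ a n)
    (n : ℕ) : a (n + 1) ≤ a 1 - n := by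
  induction n with
  | zero => simp
  | succ n ih => push_cast; linarith [ha (n + 1) (by omega)]

lemma mul_add_le_max_of_mem_Icc {a b u v t : ℝ} (ht : t ∈ Icc u v) :
    a * t + b ≤ max (a * u + b) (a * v + b) := by
  rcases le_total 0 a with ha | ha
  · exact le_max_of_le_right (by nlinarith [ht.2])
  · exact le_max_of_le_left (by nlinarith [ht.1])

lemma summable_one_div_natCast_add_one_sq :
    Summable fun k : ℕ => (1 : ℝ) / ((k : ℝ) + 1) ^ 2 := by
  simpa using (summable_nat_add_iff 1).2 (Real.summable_one_div_nat_pow.2 one_lt_two)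

lemma tendsto_sum_mul_one_div_sq_atBot {a : ℕ → ℝ} {A : ℝ} (ha : ∀ k : ℕ, a k ≤ A - k) :
    Tendsto (fun n => ∑ k ∈ range n, a k * (1 / ((k : ℝ) + 1) ^ 2)) atTop atBot := by
  have hterm : ∀ k : ℕ, a k * (1 / ((k : ℝ) + 1) ^ 2) ≤
      (A + 1) * (1 / ((k : ℝ) + 1) ^ 2) + -(1 / ((k : ℝ) + 1)) := by
    intro k
    have hsplit : (A - k) * (1 / ((k : ℝ) + 1) ^ 2) =
        (A + 1) * (1 / ((k : ℝ) + 1) ^ 2) + -(1 / ((k : ℝ) + 1)) := by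
      field_simp; ring
    rw [← hsplit]
    exact mul_le_mul_of_nonneg_right (ha k) (by positivity)
  refine tendsto_atBot_mono (fun n => sum_le_sum fun k _ => hterm k) ?_
  simp only [sum_add_distrib, ← mul_sum, sum_neg_distrib]
  exact (summable_one_div_natCast_add_one_sq.hasSum.tendsto_sum_nat.const_mul _).add_atBot
    (tendsto_neg_atTop_atBot.comp Real.tendsto_sum_range_one_div_nat_succ_atTop)

lemma tendsto_nhdsLT_atBot_of_le_max_on_pieces {g : ℝ → ℝ} {y : ℕ → ℝ} {L : ℝ}
    (hy : StrictMono y) (hyL : Tendsto y atTop (𝓝 L))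
    (hg : ∀ n, ∀ t ∈ Icc (y n) (y (n + 1)), g t ≤ max (g (y n)) (g (y (n + 1))))
    (hgy : Tendsto (g ∘ y) atTop atBot) : Tendsto g (𝓝[<] L) atBot := by
  rw [tendsto_atBot]
  intro M
  obtain ⟨N, hN⟩ := eventually_atTop.1 (hgy.eventually_le_atBot M)
  have hle : ∀ m, ∀ t ∈ Icc (y N) (y (N + m)), g t ≤ M := by
    intro m
    induction m with
    | zero =>
      intro t ht
      rw [add_zero, Set.Icc_self, mem_singleton_iff] at ht
      exact ht ▸ hN N le_rfl
    | succ m ih =>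
      intro t ht
      rcases le_total t (y (N + m)) with hlt | hge
      · exact ih t ⟨ht.1, hlt⟩
      · exact (hg _ t ⟨hge, ht.2⟩).trans (max_le (hN _ (by omega)) (hN _ (by omega)))
  have hyN : y N < L := (hy N.lt_succ_self).trans_le (hy.monotone.ge_of_tendsto hyL _)
  filter_upwards [Ioo_mem_nhdsLT hyN] with t ht
  obtain ⟨m, hm⟩ := eventually_atTop.1 (hyL.eventually (lt_mem_nhds ht.2))
  exact hle m t ⟨ht.1.le, (hm (N + m) (by omega)).le⟩

theorem piecewise_affine_concave_tendsto_atBot_general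
    (g : ℝ → ℝ) (h c : ℕ → ℝ)
    (y : ℕ → ℝ) (hy : y = fun n => ∑ k ∈ range n, (1 : ℝ) / ((k : ℝ) + 1) ^ 2)
    (yinf : ℝ) (hyinf : yinf = ∑' k : ℕ, (1 : ℝ) / ((k : ℝ) + 1) ^ 2)
    (haff : ∀ n : ℕ, ∀ t ∈ Icc (y n) (y (n + 1)), g t = h (n + 1) * t + c (n + 1))
    (hslope : ∀ n : ℕ, 1 ≤ n → h (n + 1) + 1 ≤ h n) :
    Tendsto g (nhdsWithin yinf (Iio yinf)) atBot := by
  have hy_succ : ∀ n, y (n + 1) = y n + 1 / ((n : ℝ) + 1) ^ 2 := by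
    subst hy; simp [sum_range_succ]
  have hy_strictMono : StrictMono y :=
    strictMono_nat_of_lt_succ fun n => by rw [hy_succ]; exact lt_add_of_pos_right _ (by positivity)
  have hleft n : y n ∈ Icc (y n) (y (n + 1)) := left_mem_Icc.2 (hy_strictMono n.lt_succ_self).le
  have hright n : y (n + 1) ∈ Icc (y n) (y (n + 1)) :=
    right_mem_Icc.2 (hy_strictMono n.lt_succ_self).le
  have hg_succ n : g (y (n + 1)) - g (y n) = h (n + 1) * (1 / ((n : ℝ) + 1) ^ 2) := by
    rw [haff n _ (hright n), haff n _ (hleft n), hy_succ]; ring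
  refine tendsto_nhdsLT_atBot_of_le_max_on_pieces hy_strictMono ?_ (fun n t ht => ?_) ?_
  · subst hy hyinf; exact summable_one_div_natCast_add_one_sq.hasSum.tendsto_sum_nat
  · rw [haff n t ht, haff n _ (hleft n), haff n _ (hright n)]
    exact mul_add_le_max_of_mem_Icc ht
  · have hg_eq :
        g ∘ y = fun n => g (y 0) + ∑ k ∈ range n, h (k + 1) * (1 / ((k : ℝ) + 1) ^ 2) := by
      funext n
      rw [Function.comp_apply, sum_congr rfl fun k _ => (hg_succ k).symm,
        sum_range_sub (fun k => g (y k))]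
      ring
    rw [hg_eq]
    exact tendsto_atBot_add_const_left _ _
      (tendsto_sum_mul_one_div_sq_atBot (le_sub_natCast_of_succ_add_one_le hslope))

/-- Let `y_n = Σ_{k=1}^n 1/k²`, `y_∞ = Σ_{k=1}^∞ 1/k²`. If `g` is concave on `[0, y_∞)`,
affine with slope `h_{n+1}` on each interval `[y_n, y_{n+1}]`, and the slopes satisfy
`h_n ≥ h_{n+1} + 1`, then `g(y) → -∞` as `y → y_∞⁻`. -/
theorem piecewise_affine_concave_tendsto_atBot
    (g : ℝ → ℝ) (h c : ℕ → ℝ)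
    (y : ℕ → ℝ) (hy : y = fun n => ∑ k ∈ range n, (1 : ℝ) / ((k : ℝ) + 1) ^ 2)
    (yinf : ℝ) (hyinf : yinf = ∑' k : ℕ, (1 : ℝ) / ((k : ℝ) + 1) ^ 2)
    (hconc : ConcaveOn ℝ (Ico 0 yinf) g)
    (haff : ∀ n : ℕ, ∀ t ∈ Icc (y n) (y (n + 1)), g t = h (n + 1) * t + c (n + 1))
    (hslope : ∀ n : ℕ, 1 ≤ n → h (n + 1) + 1 ≤ h n) :
    Tendsto g (nhdsWithin yinf (Iio yinf)) atBot :=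
  piecewise_affine_concave_tendsto_atBot_general g h c y hy yinf hyinf haff hslope
end

section
/- For 1 < r < 2 and s > 1 with sr < 2: define y_n = Σ_{k=1}^n 1/k^s and x_n = (y_{n−1}+y_n)/2. Then n^s·[ (1/(2(n+1)^s) + 1/n^s)^r − (1/(2(n+1)^s))^r ] is bounded below by C·n^{s−sr} for some constant C > 0 and all large n, and consequently Σ_n (y_n − y_{n−1}) · Σ_{k<n} C·k^{s−sr} = ∞. -/
open Finset Real

/-! Take `C = 1`. Superadditivity of `x ↦ x ^ r` for `r ≥ 1` gives
`(a + b) ^ r - a ^ r ≥ b ^ r`, and with `b = n ^ (-s)` this is the slope estimate.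
Since `s - s r ≤ 0`, each of the `n` terms of the inner sum is at least `n ^ (s - s r)`, so the
`n`-th summand is at least `2 ^ (-s) n ^ (1 - s r)`; as `1 - s r > -1`, these do not sum. -/

lemma rpow_le_rpow_add_sub_rpow {a b p : ℝ} (ha : 0 ≤ a) (hb : 0 ≤ b) (hp : 1 ≤ p) :
    b ^ p ≤ (a + b) ^ p - a ^ p := by
  linarith [add_rpow_le_rpow_add ha hb hp]

lemma natCast_mul_rpow_le_sum_range_rpow {t : ℝ} (ht : t ≤ 0) (n : ℕ) :
    (n : ℝ) * (n : ℝ) ^ t ≤ ∑ k ∈ range n, ((k : ℝ) + 1) ^ t := by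
  calc (n : ℝ) * (n : ℝ) ^ t = ∑ _k ∈ range n, (n : ℝ) ^ t := by simp
    _ ≤ ∑ k ∈ range n, ((k : ℝ) + 1) ^ t := by
      refine sum_le_sum fun k hk => rpow_le_rpow_of_nonpos (by positivity) ?_ ht
      exact_mod_cast mem_range.mp hk

lemma rpow_le_one_div_rpow_mul_sum_range_rpow {s t : ℝ} (hs : 0 ≤ s) (ht : t ≤ 0) {n : ℕ}
    (hn : 1 ≤ n) :
    1 / 2 ^ s * (n : ℝ) ^ (1 + t - s) ≤
      1 / ((n : ℝ) + 1) ^ s * ∑ k ∈ range n, ((k : ℝ) + 1) ^ t := by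
  have hn' : (1 : ℝ) ≤ n := by exact_mod_cast hn
  have hn0 : (0 : ℝ) < n := by linarith
  calc 1 / 2 ^ s * (n : ℝ) ^ (1 + t - s) = 1 / (2 * (n : ℝ)) ^ s * ((n : ℝ) * (n : ℝ) ^ t) := by
        rw [mul_rpow zero_le_two hn0.le, rpow_sub hn0, rpow_add hn0, rpow_one]
        field_simp
    _ ≤ 1 / ((n : ℝ) + 1) ^ s * ∑ k ∈ range n, ((k : ℝ) + 1) ^ t := by
        gcongr
        · linarith
        · exact natCast_mul_rpow_le_sum_range_rpow ht n

lemma not_summable_of_const_mul_rpow_le {f : ℕ → ℝ} {c p : ℝ} (hc : 0 < c) (hp : -1 ≤ p)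
    (hf : ∀ n : ℕ, 1 ≤ n → c * (n : ℝ) ^ p ≤ f n) : ¬ Summable f := by
  intro hsum
  have hshift : Summable fun n : ℕ => c * ((n + 1 : ℕ) : ℝ) ^ p :=
    ((summable_nat_add_iff 1).mpr hsum).of_nonneg_of_le (fun n => by positivity)
      fun n => hf (n + 1) (by omega)
  have : Summable fun n : ℕ => (n : ℝ) ^ p :=
    (summable_mul_left_iff hc.ne').mp ((summable_nat_add_iff 1).mp hshift)
  exact (summable_nat_rpow.mp this).not_ge hp

theorem slope_estimate_and_divergence_general
    (r s : ℝ) (hr1 : 1 < r) (hs : 1 < s) (hsr : s * r < 2) :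
    ∃ C : ℝ, 0 < C ∧
      (∃ N : ℕ, 1 ≤ N ∧ ∀ n : ℕ, N ≤ n →
        C * (n : ℝ) ^ (s - s * r) ≤
          (n : ℝ) ^ s *
            ((1 / (2 * ((n : ℝ) + 1) ^ s) + 1 / (n : ℝ) ^ s) ^ r
              - (1 / (2 * ((n : ℝ) + 1) ^ s)) ^ r)) ∧
      ¬ Summable (fun n : ℕ =>
        (1 / ((n : ℝ) + 1) ^ s) * ∑ k ∈ range n, C * ((k : ℝ) + 1) ^ (s - s * r)) := by
  refine ⟨1, one_pos, ⟨1, le_rfl, fun n hn => ?_⟩, ?_⟩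
  · have hn0 : (0 : ℝ) ≤ n := n.cast_nonneg
    have hb : (1 / (n : ℝ) ^ s) ^ r = (n : ℝ) ^ (-(s * r)) := by
      rw [one_div, ← rpow_neg hn0, ← rpow_mul hn0, neg_mul]
    have hlhs : 1 * (n : ℝ) ^ (s - s * r) = (n : ℝ) ^ s * (1 / (n : ℝ) ^ s) ^ r := by
      rw [hb, one_mul, ← rpow_add (by exact_mod_cast hn), sub_eq_add_neg]
    rw [hlhs]
    exact mul_le_mul_of_nonneg_left
      (rpow_le_rpow_add_sub_rpow (by positivity) (by positivity) hr1.le) (by positivity)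
  · simp only [one_mul]
    exact not_summable_of_const_mul_rpow_le (by positivity) (by linarith)
      fun n hn => rpow_le_one_div_rpow_mul_sum_range_rpow (by linarith) (by nlinarith) hn

/-- For `1 < r < 2` and `s > 1` with `sr < 2`: the slope increment estimate
`n^s ((1/(2(n+1)^s) + 1/n^s)^r - (1/(2(n+1)^s))^r) ≥ C n^{s - sr}` holds for some `C > 0`
and all large `n`, and consequently the series
`Σ_n (y_n - y_{n-1}) Σ_{k<n} C k^{s - sr}` diverges, where `y_n - y_{n-1} = 1/n^s`. -/
theorem slope_estimate_and_divergence
    (r s : ℝ) (hr1 : 1 < r) (hr2 : r < 2) (hs : 1 < s) (hsr : s * r < 2) :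
    ∃ C : ℝ, 0 < C ∧
      (∃ N : ℕ, 1 ≤ N ∧ ∀ n : ℕ, N ≤ n →
        C * (n : ℝ) ^ (s - s * r) ≤
          (n : ℝ) ^ s *
            ((1 / (2 * ((n : ℝ) + 1) ^ s) + 1 / (n : ℝ) ^ s) ^ r
              - (1 / (2 * ((n : ℝ) + 1) ^ s)) ^ r)) ∧
      ¬ Summable (fun n : ℕ =>
        (1 / ((n : ℝ) + 1) ^ s) * ∑ k ∈ range n, C * ((k : ℝ) + 1) ^ (s - s * r)) :=
  slope_estimate_and_divergence_general r s hr1 hs hsr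
end

section
/- Let ξ : (0,1) → ℝ be smooth, strictly concave, with ξ ≤ 0, ξ(1/2) = 0, and ξ(x) → −∞ as x → 0⁺ or x → 1⁻. Then for each x ∈ (0,1) there exist unique reals f(x), h(x) such that the function v_x(y) := f(x) + h(x)(y − x) − |x − y| satisfies v_x ≥ ξ on (0,1) and v_x is tangent to ξ at exactly two points y⁻(x) < x < y⁺(x). -/
open Set Filter

/-- For a smooth, strictly concave `ξ ≤ 0` on `(0,1)` with `ξ(1/2) = 0` and `ξ → -∞` at
both endpoints, for each `x ∈ (0,1)` there exist unique reals `f(x), h(x)` such that the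
tent function `v_x(y) = f(x) + h(x)(y - x) - |x - y|` dominates `ξ` on `(0,1)` and is
tangent to `ξ` at exactly two points `y⁻(x) < x < y⁺(x)`. -/
theorem tent_function_tangency
    (ξ : ℝ → ℝ)
    (hsmooth : ContDiffOn ℝ (⊤ : ℕ∞) ξ (Ioo (0 : ℝ) 1))
    (hconc : StrictConcaveOn ℝ (Ioo (0 : ℝ) 1) ξ)
    (hneg : ∀ x ∈ Ioo (0 : ℝ) 1, ξ x ≤ 0)
    (hhalf : ξ (1 / 2) = 0)
    (h0 : Tendsto ξ (nhdsWithin 0 (Ioi (0 : ℝ))) atBot)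
    (h1 : Tendsto ξ (nhdsWithin 1 (Iio (1 : ℝ))) atBot) :
    ∀ x ∈ Ioo (0 : ℝ) 1, ∃! fh : ℝ × ℝ,
      (∀ y ∈ Ioo (0 : ℝ) 1, ξ y ≤ fh.1 + fh.2 * (y - x) - |x - y|) ∧
      ∃ ym yp : ℝ, ym ∈ Ioo (0 : ℝ) 1 ∧ yp ∈ Ioo (0 : ℝ) 1 ∧ ym < x ∧ x < yp ∧
        fh.1 + fh.2 * (ym - x) - |x - ym| = ξ ym ∧
        fh.1 + fh.2 * (yp - x) - |x - yp| = ξ yp ∧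
        ∀ y ∈ Ioo (0 : ℝ) 1,
          fh.1 + fh.2 * (y - x) - |x - y| = ξ y → y = ym ∨ y = yp := by
  intro x hx
  obtain ⟨hx0, hx1⟩ := hx
  have hIoo : IsOpen (Ioo (0:ℝ) 1) := isOpen_Ioo
  have hhalfmem : (1/2 : ℝ) ∈ Ioo (0:ℝ) 1 := by norm_num
  have hdiff : ∀ t ∈ Ioo (0:ℝ) 1, DifferentiableAt ℝ ξ t := fun t ht =>
    (hsmooth.differentiableOn (by simp)).differentiableAt (hIoo.mem_nhds ht)
  have hcont : ContinuousOn ξ (Ioo (0:ℝ) 1) := hsmooth.continuousOn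
  have hdercont : ContinuousOn (deriv ξ) (Ioo (0:ℝ) 1) :=
    hsmooth.continuousOn_deriv_of_isOpen hIoo (by simp)
  -- strict tangent line inequality
  have htang : ∀ t ∈ Ioo (0:ℝ) 1, ∀ y ∈ Ioo (0:ℝ) 1, y ≠ t →
      ξ y < ξ t + deriv ξ t * (y - t) := by
    intro t ht y hy hne
    rcases lt_or_gt_of_ne hne with h | h
    · have hs := hconc.deriv_lt_slope hy ht h (hdiff t ht)
      rw [slope_def_field] at hs
      have hpos : (0:ℝ) < t - y := by linarith
      rw [lt_div_iff₀ hpos] at hs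
      nlinarith
    · have hs := hconc.slope_lt_deriv ht hy h (hdiff t ht)
      rw [slope_def_field] at hs
      have hpos : (0:ℝ) < y - t := by linarith
      rw [div_lt_iff₀ hpos] at hs
      nlinarith
  have hanti : StrictAntiOn (deriv ξ) (Ioo (0:ℝ) 1) := hconc.strictAntiOn_deriv hdiff
  -- surjectivity of the derivative
  have hsurj : ∀ s : ℝ, ∃ t ∈ Ioo (0:ℝ) 1, deriv ξ t = s := by
    intro s
    obtain ⟨a, haI, hξa⟩ : ∃ a ∈ Ioo (0:ℝ) (1/2), ξ a ≤ -(|s| + 1) := by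
      have h₁ : ∀ᶠ a in nhdsWithin 0 (Ioi (0:ℝ)), ξ a ≤ -(|s|+1) :=
        h0.eventually (eventually_le_atBot _)
      have h₂ : Ioo (0:ℝ) (1/2) ∈ nhdsWithin 0 (Ioi (0:ℝ)) :=
        Ioo_mem_nhdsGT_of_mem (by norm_num)
      exact (h₁.and h₂).exists.imp fun a ⟨h1', h2'⟩ => ⟨h2', h1'⟩
    obtain ⟨b, hbI, hξb⟩ : ∃ b ∈ Ioo (1/2:ℝ) 1, ξ b ≤ -(|s| + 1) := by
      have h₁ : ∀ᶠ b in nhdsWithin 1 (Iio (1:ℝ)), ξ b ≤ -(|s|+1) :=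
        h1.eventually (eventually_le_atBot _)
      have h₂ : Ioo (1/2:ℝ) 1 ∈ nhdsWithin 1 (Iio (1:ℝ)) :=
        Ioo_mem_nhdsLT_of_mem (by norm_num)
      exact (h₁.and h₂).exists.imp fun b ⟨h1', h2'⟩ => ⟨h2', h1'⟩
    have haI' : a ∈ Ioo (0:ℝ) 1 := ⟨haI.1, by linarith [haI.2]⟩
    have hbI' : b ∈ Ioo (0:ℝ) 1 := ⟨by linarith [hbI.1], hbI.2⟩
    have hda : s < deriv ξ a := by
      have hs := hconc.slope_lt_deriv haI' hhalfmem haI.2 (hdiff a haI')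
      rw [slope_def_field, hhalf] at hs
      have hpos : (0:ℝ) < 1/2 - a := by linarith [haI.2]
      rw [div_lt_iff₀ hpos] at hs
      have h3 : s * (1/2 - a) ≤ |s| * (1/2 - a) :=
        mul_le_mul_of_nonneg_right (le_abs_self s) hpos.le
      have h4 : |s| * (1/2 - a) ≤ |s| * 1 :=
        mul_le_mul_of_nonneg_left (by linarith [haI.1]) (abs_nonneg s)
      nlinarith
    have hdb : deriv ξ b < s := by
      have hs := hconc.deriv_lt_slope hhalfmem hbI' hbI.1 (hdiff b hbI')
      rw [slope_def_field, hhalf] at hs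
      have hpos : (0:ℝ) < b - 1/2 := by linarith [hbI.1]
      rw [lt_div_iff₀ hpos] at hs
      have h3 : -|s| * (b - 1/2) ≤ s * (b - 1/2) :=
        mul_le_mul_of_nonneg_right (neg_abs_le s) hpos.le
      have h4 : -|s| * 1 ≤ -|s| * (b - 1/2) := by
        have : (b - 1/2 : ℝ) ≤ 1 := by linarith [hbI.2]
        nlinarith [abs_nonneg s]
      nlinarith
    have hab : a ≤ b := by linarith [haI.2, hbI.1]
    have hsub : Icc a b ⊆ Ioo (0:ℝ) 1 := fun z hz => ⟨lt_of_lt_of_le haI'.1 hz.1,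
      lt_of_le_of_lt hz.2 hbI'.2⟩
    have := intermediate_value_Icc' hab (hdercont.mono hsub)
    obtain ⟨t, htI, hts⟩ := this ⟨hdb.le, hda.le⟩
    exact ⟨t, hsub htI, hts⟩
  choose Y hYmem hYd using hsurj
  have hYinv : ∀ t ∈ Ioo (0:ℝ) 1, Y (deriv ξ t) = t := by
    intro t ht
    exact hanti.injOn (hYmem _) ht (hYd _)
  have hYanti : ∀ {s₁ s₂ : ℝ}, s₁ < s₂ → Y s₂ < Y s₁ := by
    intro s₁ s₂ hlt
    by_contra hcon
    push_neg at hcon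
    rcases eq_or_lt_of_le hcon with heq | hlt2
    · rw [← hYd s₁, ← hYd s₂, ← heq] at hlt; exact lt_irrefl _ hlt
    · have := hanti (hYmem s₁) (hYmem s₂) hlt2
      rw [hYd, hYd] at this; linarith
  have hYlt : ∀ {s' u : ℝ}, u ∈ Ioo (0:ℝ) 1 → s' < deriv ξ u → u < Y s' := by
    intro s' u hu hlt
    by_contra hc
    push_neg at hc
    rcases eq_or_lt_of_le hc with he | hl
    · rw [← he, hYd] at hlt; exact lt_irrefl _ hlt
    · have h2 := hanti (hYmem s') hu hl
      rw [hYd] at h2; linarith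
  have hYgt : ∀ {s' u : ℝ}, u ∈ Ioo (0:ℝ) 1 → deriv ξ u < s' → Y s' < u := by
    intro s' u hu hlt
    by_contra hc
    push_neg at hc
    rcases eq_or_lt_of_le hc with he | hl
    · rw [he, hYd] at hlt; exact lt_irrefl _ hlt
    · have h2 := hanti hu (hYmem s') hl
      rw [hYd] at h2; linarith
  have hYcont : Continuous Y := by
    rw [continuous_iff_continuousAt]
    intro s
    rw [Metric.continuousAt_iff]
    intro ε hε
    obtain ⟨ht0, ht1⟩ := hYmem s
    set t := Y s with htdef
    set ε' : ℝ := min (ε/2) (min (t/2) ((1-t)/2)) with hε'def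
    have hε'pos : 0 < ε' :=
      lt_min (by linarith) (lt_min (by linarith) (by linarith))
    have hε'lt : ε' < ε := lt_of_le_of_lt (min_le_left _ _) (by linarith)
    have ht₁ : t - ε' ∈ Ioo (0:ℝ) 1 := by
      refine ⟨?_, by linarith⟩
      have : ε' ≤ t/2 := le_trans (min_le_right _ _) (min_le_left _ _)
      linarith
    have ht₂ : t + ε' ∈ Ioo (0:ℝ) 1 := by
      refine ⟨by linarith, ?_⟩
      have : ε' ≤ (1-t)/2 := le_trans (min_le_right _ _) (min_le_right _ _)
      linarith
    have hd₁ : s < deriv ξ (t - ε') := by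
      have h2 := hanti ht₁ (hYmem s) (by linarith)
      rw [hYd] at h2; exact h2
    have hd₂ : deriv ξ (t + ε') < s := by
      have h2 := hanti (hYmem s) ht₂ (by linarith)
      rw [hYd] at h2; exact h2
    refine ⟨min (deriv ξ (t - ε') - s) (s - deriv ξ (t + ε')),
      lt_min (by linarith) (by linarith), ?_⟩
    intro s' hs'
    rw [Real.dist_eq] at hs' ⊢
    have habs := abs_lt.mp hs'
    have hmin1 := min_le_left (deriv ξ (t - ε') - s) (s - deriv ξ (t + ε'))
    have hmin2 := min_le_right (deriv ξ (t - ε') - s) (s - deriv ξ (t + ε'))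
    have h1' : s' < deriv ξ (t - ε') := by linarith
    have h2' : deriv ξ (t + ε') < s' := by linarith
    have hlo := hYlt ht₁ h1'
    have hhi := hYgt ht₂ h2'
    rw [abs_lt]
    constructor <;> linarith
  -- the supporting-line value at x, as a function of the slope
  set A : ℝ → ℝ := fun s => ξ (Y s) + s * (x - Y s) with hAdef
  have hA : ∀ s : ℝ, ∀ t ∈ Ioo (0:ℝ) 1, t ≠ Y s → ξ t + s * (x - t) < A s := by
    intro s t ht hne
    have h2 := htang (Y s) (hYmem s) t ht hne
    rw [hYd] at h2
    simp only [hAdef]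
    nlinarith
  have hAcont : Continuous A := by
    have h2 : Continuous fun s => ξ (Y s) := by
      rw [continuous_iff_continuousAt]
      intro s
      exact (hcont.continuousAt (hIoo.mem_nhds (hYmem s))).comp hYcont.continuousAt
    exact h2.add (continuous_id.mul (continuous_const.sub hYcont))
  set F : ℝ → ℝ := fun h => A (h+1) - A (h-1) with hFdef
  have hFcont : Continuous F := (hAcont.comp (continuous_id.add continuous_const)).sub (hAcont.comp (continuous_id.sub continuous_const))
  -- bounds on F
  have hFlow : ∀ h : ℝ, 2 * (x - Y (h-1)) < F h := by
    intro h
    have hne : Y (h-1) ≠ Y (h+1) := ne_of_gt (hYanti (by linarith))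
    have h2 := hA (h+1) (Y (h-1)) (hYmem _) hne
    simp only [hFdef, hAdef]
    simp only [hAdef] at h2
    nlinarith
  have hFup : ∀ h : ℝ, F h < 2 * (x - Y (h+1)) := by
    intro h
    have hne : Y (h+1) ≠ Y (h-1) := ne_of_lt (hYanti (by linarith))
    have h2 := hA (h-1) (Y (h+1)) (hYmem _) hne
    simp only [hFdef, hAdef]
    simp only [hAdef] at h2
    nlinarith
  -- F is strictly monotone
  have hFmono : StrictMono F := by
    intro h₁ h₂ hlt
    rcases lt_or_ge h₂ (h₁ + 2) with hcase | hcase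
    · have hne1 : Y (h₁+1) ≠ Y (h₂+1) := ne_of_gt (hYanti (by linarith))
      have hne2 : Y (h₂-1) ≠ Y (h₁-1) := ne_of_lt (hYanti (show h₁-1 < h₂-1 by linarith))
      have hb1 := hA (h₂+1) (Y (h₁+1)) (hYmem _) hne1
      have hb2 := hA (h₁-1) (Y (h₂-1)) (hYmem _) hne2
      have hY12 : Y (h₁+1) < Y (h₂-1) := hYanti (by linarith)
      simp only [hFdef, hAdef]
      simp only [hAdef] at hb1 hb2
      nlinarith
    · have hb1 : F h₁ < 2 * (x - Y (h₁+1)) := hFup h₁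
      have hb2 : 2 * (x - Y (h₂-1)) < F h₂ := hFlow h₂
      have hY12 : Y (h₂-1) ≤ Y (h₁+1) := by
        rcases eq_or_lt_of_le hcase with he | hl
        · have he2 : h₂ - 1 = h₁ + 1 := by linarith
          rw [he2]
        · exact le_of_lt (hYanti (by linarith))
      linarith
  -- find a sign change for F
  have hmem1 : (x+1)/2 ∈ Ioo (0:ℝ) 1 := ⟨by linarith, by linarith⟩
  have hmem2 : x/2 ∈ Ioo (0:ℝ) 1 := ⟨by linarith, by linarith⟩
  set hlo : ℝ := deriv ξ ((x+1)/2) - 1 with hlodef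
  set hhi : ℝ := deriv ξ (x/2) + 1 with hhidef
  have hFlo : F hlo < 0 := by
    have h2 := hFup hlo
    have h3 : hlo + 1 = deriv ξ ((x+1)/2) := by rw [hlodef]; ring
    rw [h3, hYinv _ hmem1] at h2
    exact h2.trans (by linarith)
  have hFhi : 0 < F hhi := by
    have h2 := hFlow hhi
    have h3 : hhi - 1 = deriv ξ (x/2) := by rw [hhidef]; ring
    rw [h3, hYinv _ hmem2] at h2
    exact lt_of_le_of_lt (by linarith) h2
  have hlohi : hlo < hhi := by
    rcases lt_or_ge hlo hhi with hcase | hcase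
    · exact hcase
    · exact absurd (hFmono.monotone hcase) (not_le.mpr (hFlo.trans hFhi))
  obtain ⟨h₀, hIcc₀, hFh₀⟩ := intermediate_value_Icc hlohi.le hFcont.continuousOn
    ⟨hFlo.le, hFhi.le⟩
  clear hIcc₀ hFlo hFhi hlohi hlodef hhidef
  set p := Y (h₀ + 1) with hpdef
  set q := Y (h₀ - 1) with hqdef
  have hpmem : p ∈ Ioo (0:ℝ) 1 := hYmem _
  have hqmem : q ∈ Ioo (0:ℝ) 1 := hYmem _
  have hdp : deriv ξ p = h₀ + 1 := hYd _
  have hdq : deriv ξ q = h₀ - 1 := hYd _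
  have hpx : p < x := by have := hFup h₀; rw [hFh₀] at this; linarith
  have hxq : x < q := by have := hFlow h₀; rw [hFh₀] at this; linarith
  have hAeq : A (h₀+1) = A (h₀-1) := by
    have h2 : F h₀ = 0 := hFh₀
    simp only [hFdef] at h2
    linarith
  set f := A (h₀+1) with hfdef
  have hfp : f = ξ p + (h₀+1)*(x - p) := rfl
  have hfq : f = ξ q + (h₀-1)*(x - q) := hAeq
  have hleft : ∀ y ∈ Ioo (0:ℝ) 1, y ≠ p → ξ y < f + (h₀+1)*(y - x) := by
    intro y hy hne
    have h2 := htang p hpmem y hy hne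
    rw [hdp] at h2
    have h3 : f + (h₀+1)*(y-x) = ξ p + (h₀+1)*(y-p) := by rw [hfp]; ring
    linarith
  have hright : ∀ y ∈ Ioo (0:ℝ) 1, y ≠ q → ξ y < f + (h₀-1)*(y - x) := by
    intro y hy hne
    have h2 := htang q hqmem y hy hne
    rw [hdq] at h2
    have h3 : f + (h₀-1)*(y-x) = ξ q + (h₀-1)*(y-q) := by rw [hfq]; ring
    linarith
  refine ⟨(f, h₀), ⟨?_, p, q, hpmem, hqmem, hpx, hxq, ?_, ?_, ?_⟩, ?_⟩
  · -- domination
    intro y hy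
    rcases le_or_gt y x with hyx | hyx
    · rw [abs_of_nonneg (show (0:ℝ) ≤ x - y by linarith)]
      have hr : f + h₀*(y-x) - (x-y) = f + (h₀+1)*(y-x) := by ring
      rw [hr]
      by_cases hne : y = p
      · rw [hne]
        have h5 : f + (h₀+1)*(p-x) = ξ p := by rw [hfp]; ring
        linarith
      · exact (hleft y hy hne).le
    · rw [abs_of_neg (show x - y < 0 by linarith)]
      have hr : f + h₀*(y-x) - -(x-y) = f + (h₀-1)*(y-x) := by ring
      rw [hr]
      by_cases hne : y = q
      · rw [hne]
        have h5 : f + (h₀-1)*(q-x) = ξ q := by rw [hfq]; ring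
        linarith
      · exact (hright y hy hne).le
  · rw [abs_of_nonneg (show (0:ℝ) ≤ x - p by linarith), hfp]; ring
  · rw [abs_of_neg (show x - q < 0 by linarith), hfq]; ring
  · -- exactly two tangency points
    intro y hy heq
    rcases le_or_gt y x with hyx | hyx
    · left
      by_contra hne
      rw [abs_of_nonneg (show (0:ℝ) ≤ x - y by linarith)] at heq
      have := hleft y hy hne
      linarith
    · right
      by_contra hne
      rw [abs_of_neg (show x - y < 0 by linarith)] at heq
      have := hright y hy hne
      linarith
  · -- uniqueness
    rintro ⟨f', h'⟩ ⟨hdom', ym, yp, hymmem, hypmem, hymx, hxyp, heqm, heqp, -⟩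
    simp only at hdom' heqm heqp
    rw [abs_of_nonneg (show (0:ℝ) ≤ x - ym by linarith)] at heqm
    rw [abs_of_neg (show x - yp < 0 by linarith)] at heqp
    have hm' : f' + (h'+1)*(ym - x) = ξ ym := by linear_combination heqm
    have hp' : f' + (h'-1)*(yp - x) = ξ yp := by linear_combination heqp
    -- tangency at ym gives the slope there
    have hdym : deriv ξ ym = h' + 1 := by
      have hgmin : IsLocalMin (fun y => f' + (h'+1)*(y-x) - ξ y) ym := by
        filter_upwards [isOpen_Ioo.mem_nhds (show ym ∈ Ioo (0:ℝ) x from ⟨hymmem.1, hymx⟩)]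
          with y hy
        have hyI : y ∈ Ioo (0:ℝ) 1 := ⟨hy.1, lt_trans hy.2 hx1⟩
        have hd := hdom' y hyI
        rw [abs_of_nonneg (show (0:ℝ) ≤ x - y by linarith [hy.2])] at hd
        have hr : f' + h'*(y-x) - (x-y) = f' + (h'+1)*(y-x) := by ring
        have hm2 := hm'
        linarith
      have hder : HasDerivAt (fun y => f' + (h'+1)*(y-x) - ξ y) ((h'+1) - deriv ξ ym) ym := by
        have h2 : HasDerivAt (fun y : ℝ => f' + (h'+1)*(y-x)) (h'+1) ym := by
          simpa using (((hasDerivAt_id ym).sub_const x).const_mul (h'+1)).const_add f'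
        exact h2.sub (hdiff ym hymmem).hasDerivAt
      have := hgmin.hasDerivAt_eq_zero hder
      linarith
    have hdyp : deriv ξ yp = h' - 1 := by
      have hgmin : IsLocalMin (fun y => f' + (h'-1)*(y-x) - ξ y) yp := by
        filter_upwards [isOpen_Ioo.mem_nhds (show yp ∈ Ioo x 1 from ⟨hxyp, hypmem.2⟩)]
          with y hy
        have hyI : y ∈ Ioo (0:ℝ) 1 := ⟨lt_trans hx0 hy.1, hy.2⟩
        have hd := hdom' y hyI
        rw [abs_of_neg (show x - y < 0 by linarith [hy.1])] at hd
        have hr : f' + h'*(y-x) - -(x-y) = f' + (h'-1)*(y-x) := by ring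
        have hp2 := hp'
        linarith
      have hder : HasDerivAt (fun y => f' + (h'-1)*(y-x) - ξ y) ((h'-1) - deriv ξ yp) yp := by
        have h2 : HasDerivAt (fun y : ℝ => f' + (h'-1)*(y-x)) (h'-1) yp := by
          simpa using (((hasDerivAt_id yp).sub_const x).const_mul (h'-1)).const_add f'
        exact h2.sub (hdiff yp hypmem).hasDerivAt
      have := hgmin.hasDerivAt_eq_zero hder
      linarith
    have hymY : ym = Y (h'+1) := by rw [← hdym]; exact (hYinv ym hymmem).symm
    have hypY : yp = Y (h'-1) := by rw [← hdyp]; exact (hYinv yp hypmem).symm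
    have hf1 : f' = A (h'+1) := by
      have h2 : A (h'+1) = ξ ym + (h'+1)*(x - ym) := by
        simp only [hAdef]
        rw [← hymY]
      rw [h2]
      linear_combination hm'
    have hf2 : f' = A (h'-1) := by
      have h2 : A (h'-1) = ξ yp + (h'-1)*(x - yp) := by
        simp only [hAdef]
        rw [← hypY]
      rw [h2]
      linear_combination hp'
    have hFh' : F h' = 0 := by
      simp only [hFdef]
      rw [← hf1, ← hf2]
      ring
    have hh' : h' = h₀ := hFmono.injective (by rw [hFh', hFh₀])
    subst hh'
    have : f' = f := hf1
    rw [this]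
end
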